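/- arXiv:1804.03081 — 5 statements merged into one kernel-verified Lean document; each statement's English description precedes it below -/
import Mathlib

section
/- Aggregate variational formulation without utilities: assume u_θ ≡ 0 for all θ and each c_t differentiable, convex and increasing. Let X̃ = { ∫_Θ x_θ dθ : x a measurable profile with x_θ ∈ X_θ a.e. } ⊆ ℝ^T be the aggregate feasible set. Then a profile x* with aggregate X* = ∫_Θ x*_θ dθ is a Wardrop equilibrium if and only if ⟨c(X*), Y − X*⟩ ≥ 0 for every Y ∈ X̃. -/
/-!
Pairing with the cost vector `a = c(X*)` turns both sides into statements about the linear
functional `⟪a, ·⟫`. The variational inequality at `Y = ∫ x` says `∫ ⟪a, x θ - x* θ⟫ ≥ 0`, which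
follows by integrating the pointwise equilibrium inequality. Conversely, if the equilibrium
inequality fails on a set of positive measure, the players there have strictly cheaper strategies,
and a profile switching to them on that set has a strictly smaller aggregate cost.

Making the switch measurable is a measurable-selection problem for the Borel set
`{(θ, y) | y ∈ X θ, ⟪a, y⟫ < ⟪a, x* θ⟫}`. Writing it as a continuous image of Baire space, a
capacitability argument finds a compact subset whose projection still has positive measure, and a
compact set has a Borel selection: shrink each slice, step `n`, to the ball of radius `2⁻ⁿ` around
the first point of a dense sequence that meets it.
-/

open scoped RealInnerProductSpace ENNReal
open Metric Set MeasureTheory Filter Topology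

lemma measurable_sInf_setOf_nat {α : Type*} [MeasurableSpace α] {p : α → ℕ → Prop}
    (hp : ∀ i, MeasurableSet {x | p x i}) : Measurable fun x => sInf {i | p x i} := by
  classical
  have hex : ∀ x, ∃ i, p x i ∨ ∀ j, ¬ p x j := fun x => by
    by_cases h : ∃ i, p x i
    · exact h.imp fun _ => Or.inl
    · exact ⟨0, Or.inr (not_exists.1 h)⟩
  have hfind : (fun x => sInf {i | p x i}) = fun x => Nat.find (hex x) := by
    funext x
    by_cases h : ∃ i, p x i
    · refine le_antisymm (Nat.sInf_le ((Nat.find_spec (hex x)).resolve_right ?_)) ?_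
      · exact fun hnone => hnone _ h.choose_spec
      · exact Nat.find_min' _ (Or.inl (Nat.sInf_mem h))
    · rw [not_exists] at h
      have hempty : {i | p x i} = ∅ := eq_empty_iff_forall_notMem.2 h
      rw [hempty, Nat.sInf_empty]
      exact ((Nat.find_eq_zero _).2 (Or.inr h)).symm
  rw [hfind]
  refine measurable_find hex fun k => ?_
  simpa only [ofPred_or, ofPred_forall, ← compl_ofPred] using
    (hp k).union (.iInter fun j => (hp j).compl)

section CompactSelection

variable {α E : Type*} [MetricSpace E]

noncomputable def ballIndex (e : ℕ → E) (r : ℝ) (S : Set E) : ℕ :=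
  sInf {i | (S ∩ closedBall (e i) r).Nonempty}

noncomputable def refinedSlice (K : Set (α × E)) (e : ℕ → E) : ℕ → α → Set E
  | 0, θ => {y | (θ, y) ∈ K}
  | n + 1, θ => refinedSlice K e n θ ∩
      closedBall (e (ballIndex e ((1 / 2) ^ n) (refinedSlice K e n θ))) ((1 / 2) ^ n)

variable (K : Set (α × E)) (e : ℕ → E)

lemma refinedSlice_antitone (θ : α) : Antitone fun n => refinedSlice K e n θ :=
  antitone_nat_of_succ_le fun _ => inter_subset_left

lemma refinedSlice_nonempty (he : DenseRange e) {θ : α} (h : (refinedSlice K e 0 θ).Nonempty)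
    (n : ℕ) : (refinedSlice K e n θ).Nonempty := by
  induction n with
  | zero => exact h
  | succ n ih =>
    obtain ⟨y, hy⟩ := ih
    obtain ⟨i, hi⟩ := he.exists_dist_lt y (pow_pos (one_half_pos (α := ℝ)) n)
    exact Nat.sInf_mem (s := {i | (refinedSlice K e n θ ∩ closedBall (e i) _).Nonempty})
      ⟨i, y, hy, mem_closedBall.2 hi.le⟩

lemma dist_ballIndex_le_of_mem_iInter {θ : α} {z : E} (hz : z ∈ ⋂ n, refinedSlice K e n θ)
    (n : ℕ) : dist (e (ballIndex e ((1 / 2) ^ n) (refinedSlice K e n θ))) z ≤ (1 / 2) ^ n :=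
  dist_comm z _ ▸ mem_closedBall.1 (mem_iInter.1 hz (n + 1)).2

variable [TopologicalSpace α]

lemma isClosed_refinedSlice (hK : IsClosed K) (n : ℕ) (θ : α) :
    IsClosed (refinedSlice K e n θ) := by
  induction n with
  | zero => exact hK.preimage (.prodMk_right θ)
  | succ n ih => exact ih.inter isClosed_closedBall

variable [MeasurableSpace α] [OpensMeasurableSpace α] [T2Space α]

lemma measurableSet_refinedSlice_inter_nonempty (hK : IsCompact K) (n : ℕ) :
    ∀ C : Set E, IsClosed C → MeasurableSet {θ | (refinedSlice K e n θ ∩ C).Nonempty} := by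
  induction n with
  | zero =>
    intro C hC
    have hproj : {θ | (refinedSlice K e 0 θ ∩ C).Nonempty} = Prod.fst '' (K ∩ univ ×ˢ C) := by
      ext θ
      exact ⟨fun ⟨y, hyK, hyC⟩ => ⟨(θ, y), ⟨hyK, trivial, hyC⟩, rfl⟩,
        fun ⟨p, ⟨hpK, _, hpC⟩, hpθ⟩ => ⟨p.2, by rwa [← hpθ], hpC⟩⟩
    rw [hproj]
    exact ((hK.inter_right (isClosed_univ.prod hC)).image continuous_fst).measurableSet
  | succ n ih =>
    intro C hC
    have hidx : Measurable fun θ => ballIndex e ((1 / 2) ^ n) (refinedSlice K e n θ) :=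
      measurable_sInf_setOf_nat fun i => ih _ isClosed_closedBall
    have hunion : {θ | (refinedSlice K e (n + 1) θ ∩ C).Nonempty} =
        ⋃ i, (fun θ => ballIndex e ((1 / 2) ^ n) (refinedSlice K e n θ)) ⁻¹' {i} ∩
          {θ | (refinedSlice K e n θ ∩ (closedBall (e i) ((1 / 2) ^ n) ∩ C)).Nonempty} := by
      ext θ
      simp only [refinedSlice, mem_ofPred_eq, mem_iUnion, mem_inter_iff, mem_preimage,
        mem_singleton_iff, inter_assoc, exists_eq_left']
    rw [hunion]
    exact .iUnion fun i => (hidx (measurableSet_singleton i)).inter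
      (ih _ (isClosed_closedBall.inter hC))

variable [MeasurableSpace E] [BorelSpace E] [TopologicalSpace.SeparableSpace E] [Nonempty E]

theorem IsCompact.exists_measurable_selection {K : Set (α × E)} (hK : IsCompact K) :
    ∃ g : α → E, Measurable g ∧ ∀ θ ∈ Prod.fst '' K, (θ, g θ) ∈ K := by
  obtain ⟨e, he⟩ := TopologicalSpace.exists_dense_seq E
  set center : ℕ → α → E := fun n θ => e (ballIndex e ((1 / 2) ^ n) (refinedSlice K e n θ))
  have hlim : ∀ θ, ∃ z, Tendsto (center · θ) atTop (𝓝 z) ∧ (θ ∈ Prod.fst '' K → (θ, z) ∈ K) := by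
    intro θ
    by_cases hθ : (refinedSlice K e 0 θ).Nonempty
    · have hcpt : IsCompact (refinedSlice K e 0 θ) :=
        (hK.image continuous_snd).of_isClosed_subset (isClosed_refinedSlice K e hK.isClosed 0 θ)
          fun y hy => ⟨(θ, y), hy, rfl⟩
      obtain ⟨z, hz⟩ := IsCompact.nonempty_iInter_of_sequence_nonempty_isCompact_isClosed _
        (fun n => refinedSlice_antitone K e θ n.le_succ) (refinedSlice_nonempty K e he hθ) hcpt
        (isClosed_refinedSlice K e hK.isClosed · θ)
      refine ⟨z, tendsto_iff_dist_tendsto_zero.2 ?_, fun _ => mem_iInter.1 hz 0⟩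
      exact squeeze_zero (fun _ => dist_nonneg) (dist_ballIndex_le_of_mem_iInter K e hz)
        (tendsto_pow_atTop_nhds_zero_of_lt_one (by norm_num) (by norm_num))
    -- Off the projection of `K` every slice is empty, so `ballIndex` takes its junk value `0`.
    · have hempty : ∀ n, refinedSlice K e n θ = ∅ := fun n =>
        subset_empty_iff.1 ((refinedSlice_antitone K e θ n.zero_le).trans
          (not_nonempty_iff_eq_empty.1 hθ).subset)
      refine ⟨e 0, tendsto_const_nhds.congr fun n => ?_, fun ⟨p, hp, hpθ⟩ => ?_⟩
      · simp [center, ballIndex, hempty]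
      · exact absurd ⟨p.2, by rwa [← hpθ]⟩ hθ
  choose g hg using hlim
  refine ⟨g, measurable_of_tendsto_metrizable' atTop (fun n => ?_)
    (tendsto_pi_nhds.2 fun θ => (hg θ).1), fun θ hθ => (hg θ).2 hθ⟩
  exact measurable_from_nat.comp
    (measurable_sInf_setOf_nat fun i => measurableSet_refinedSlice_inter_nonempty K e hK n _
      isClosed_closedBall)

end CompactSelection

lemma exists_pi_Iio_subset_of_isOpen (b : ℕ → ℕ) {V : Set (ℕ → ℕ)} (hV : IsOpen V)
    (hbV : univ.pi (fun i => Iic (b i)) ⊆ V) : ∃ m, (Iio m).pi (fun i => Iic (b i)) ⊆ V := by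
  by_contra! h
  choose ω hω hωV using fun m => not_subset.1 (h m)
  have hbox : IsCompact (univ.pi fun i => Iic (b i)) :=
    isCompact_univ_pi fun i => (finite_Iic _).isCompact
  obtain ⟨a, ha, φ, hφ, hlim⟩ := hbox.tendsto_subseq (x := fun m i => min (ω m i) (b i))
    fun m => mem_univ_pi.2 fun i => mem_Iic.2 (min_le_right _ _)
  -- The truncation `min (ω m i) (b i)` only changes coordinates `i ≥ m`.
  have hωlim : Tendsto (ω ∘ φ) atTop (𝓝 a) := tendsto_pi_nhds.2 fun i =>
    (tendsto_pi_nhds.1 hlim i).congr' <| (eventually_gt_atTop i).mono fun k hk =>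
      min_eq_left (hω (φ k) i (hk.trans_le (hφ.id_le k)))
  obtain ⟨k, hk⟩ := (hωlim.eventually (hV.mem_nhds (hbV ha))).exists
  exact hωV (φ k) hk

theorem exists_isCompact_lt_measure_image {α : Type*} [TopologicalSpace α] [MeasurableSpace α]
    {μ : Measure α} [μ.OuterRegular] {f : (ℕ → ℕ) → α} (hf : Continuous f) {r : ℝ≥0∞}
    (hr : r < μ (range f)) : ∃ L, IsCompact L ∧ r < μ (f '' L) := by
  obtain ⟨r', hrr', hr'⟩ := exists_between hr
  have hstep : ∀ (m : ℕ) (S : Set (ℕ → ℕ)), r' < μ (f '' S) →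
      ∃ k, r' < μ (f '' (S ∩ {ω | ω m ≤ k})) := by
    intro m S hS
    have hunion : f '' S = ⋃ k, f '' (S ∩ {ω | ω m ≤ k}) := by
      rw [← image_iUnion, ← inter_iUnion, iUnion_eq_univ_iff.2 fun ω => ⟨ω m, by simp⟩,
        inter_univ]
    have hmono : Monotone fun k => f '' (S ∩ {ω | ω m ≤ k}) := fun k l hkl =>
      image_mono (inter_subset_inter_right _ fun ω hω => le_trans hω hkl)
    rw [hunion, hmono.measure_iUnion] at hS
    exact lt_iSup_iff.1 hS
  choose! k hk using hstep
  -- Bound the coordinates one at a time, keeping the measure of the image above `r'`.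
  let S : ℕ → Set (ℕ → ℕ) := fun m => Nat.rec univ (fun m Sm => Sm ∩ {ω | ω m ≤ k m Sm}) m
  let b : ℕ → ℕ := fun m => k m (S m)
  have hS : ∀ m, r' < μ (f '' S m) := fun m => by
    induction m with
    | zero => simpa [S] using hr'
    | succ m ih => exact hk m _ ih
  have hSb : ∀ m, S m ⊆ (Iio m).pi fun i => Iic (b i) := fun m => by
    induction m with
    | zero => simp
    | succ m ih =>
      rintro ω ⟨hωS, hωm⟩ i hi
      rcases (Nat.lt_succ_iff.1 hi).lt_or_eq with hi | rfl
      exacts [ih hωS i hi, hωm]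
  refine ⟨univ.pi fun i => Iic (b i), isCompact_univ_pi fun i => (finite_Iic _).isCompact,
    hrr'.trans_le (not_lt.1 fun hlt => ?_)⟩
  obtain ⟨U, hLU, hU, hUr⟩ := (f '' _).exists_isOpen_lt_of_lt r' hlt
  obtain ⟨m, hm⟩ := exists_pi_Iio_subset_of_isOpen b (hU.preimage hf) (image_subset_iff.1 hLU)
  exact (hS m).not_ge ((measure_mono (image_subset_iff.2 ((hSb m).trans hm))).trans hUr.le)

theorem MeasurableSet.exists_measurable_selection_of_measure_image_ne_zero
    {α E : Type*} [TopologicalSpace α] [PolishSpace α] [MeasurableSpace α] [BorelSpace α]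
    {μ : Measure α} [μ.OuterRegular] [MetricSpace E] [TopologicalSpace.SeparableSpace E]
    [CompleteSpace E] [MeasurableSpace E] [BorelSpace E] {G : Set (α × E)} (hG : MeasurableSet G)
    (hμG : μ (Prod.fst '' G) ≠ 0) :
    ∃ S, MeasurableSet S ∧ μ S ≠ 0 ∧ ∃ g : α → E, Measurable g ∧ ∀ θ ∈ S, (θ, g θ) ∈ G := by
  have hGa := hG.analyticSet
  rw [AnalyticSet] at hGa
  rcases hGa with rfl | ⟨F, hF, rfl⟩
  · simp at hμG
  have : Nonempty E := ⟨(F default).2⟩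
  obtain ⟨L, hL, hμL⟩ := exists_isCompact_lt_measure_image (μ := μ) (continuous_fst.comp hF) (r := 0)
    (by rwa [range_comp, pos_iff_ne_zero])
  have hK := hL.image hF
  obtain ⟨g, hg, hgK⟩ := hK.exists_measurable_selection
  refine ⟨Prod.fst '' (F '' L), (hK.image continuous_fst).measurableSet, ?_, g, hg,
    fun θ hθ => image_subset_range F L (hgK θ hθ)⟩
  rwa [image_image, ← pos_iff_ne_zero]

lemma integral_lt_integral_of_ae_le_of_measure_setOf_lt_ne_zero {α : Type*} [MeasurableSpace α]
    {μ : Measure α} {f g : α → ℝ} (hf : Integrable f μ) (hg : Integrable g μ) (hfg : f ≤ᵐ[μ] g)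
    (hlt : μ {θ | f θ < g θ} ≠ 0) : ∫ θ, f θ ∂μ < ∫ θ, g θ ∂μ := by
  rw [← sub_pos, ← integral_sub hg hf, integral_pos_iff_support_of_nonneg_ae
    (hfg.mono fun _ => sub_nonneg.2) (hg.sub hf), pos_iff_ne_zero]
  exact fun h0 => hlt (measure_mono_null (fun θ hθ => (sub_pos.2 hθ).ne') h0)

section VariationalInequality

variable {α E : Type*} [TopologicalSpace α] [PolishSpace α] [MeasurableSpace α] [BorelSpace α]
  {μ : Measure α} [NormedAddCommGroup E] [InnerProductSpace ℝ E] [CompleteSpace E]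
  [SecondCountableTopology E] [MeasurableSpace E] [BorelSpace E] {X : α → Set E}

lemma exists_measurable_ae_mem_inner_le_and_measure_lt_ne_zero [μ.OuterRegular]
    (hX : MeasurableSet {p : α × E | p.2 ∈ X p.1}) (a : E) {x₀ : α → E} (hx₀ : Measurable x₀)
    (hx₀X : ∀ᵐ θ ∂μ, x₀ θ ∈ X θ) (hbad : ¬ ∀ᵐ θ ∂μ, ∀ y ∈ X θ, ⟪a, x₀ θ⟫ ≤ ⟪a, y⟫) :
    ∃ x : α → E, Measurable x ∧ (∀ᵐ θ ∂μ, x θ ∈ X θ) ∧ (∀ θ, ⟪a, x θ⟫ ≤ ⟪a, x₀ θ⟫) ∧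
      μ {θ | ⟪a, x θ⟫ < ⟪a, x₀ θ⟫} ≠ 0 := by
  classical
  have hG : MeasurableSet {p : α × E | p.2 ∈ X p.1 ∧ ⟪a, p.2⟫ < ⟪a, x₀ p.1⟫} :=
    hX.inter (measurableSet_lt (f := fun p : α × E => ⟪a, p.2⟫)
      (g := fun p : α × E => ⟪a, x₀ p.1⟫) (measurable_const.inner measurable_snd)
      (measurable_const.inner (hx₀.comp measurable_fst)))
  have hprojG : μ (Prod.fst '' {p : α × E | p.2 ∈ X p.1 ∧ ⟪a, p.2⟫ < ⟪a, x₀ p.1⟫}) ≠ 0 := by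
    rw [ae_iff] at hbad
    convert hbad using 2
    ext θ
    simp
  obtain ⟨S, hS, hμS, g, hg, hgS⟩ := hG.exists_measurable_selection_of_measure_image_ne_zero hprojG
  have hlt : ∀ θ ∈ S, ⟪a, S.piecewise g x₀ θ⟫ < ⟪a, x₀ θ⟫ := fun θ hθS => by
    simpa [hθS] using (hgS θ hθS).2
  refine ⟨S.piecewise g x₀, Measurable.piecewise hS hg hx₀, hx₀X.mono fun θ hθ => ?_,
    fun θ => ?_, fun h0 => hμS (measure_mono_null hlt h0)⟩
  · by_cases hθS : θ ∈ S
    · simpa [hθS] using (hgS θ hθS).1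
    · simpa [hθS] using hθ
  · by_cases hθS : θ ∈ S
    · exact (hlt θ hθS).le
    · simp [hθS]

theorem ae_forall_inner_le_iff_forall_inner_integral_le [IsFiniteMeasure μ] {M : ℝ}
    (hX : MeasurableSet {p : α × E | p.2 ∈ X p.1}) (hXM : ∀ θ, X θ ⊆ closedBall 0 M) (a : E)
    {x₀ : α → E} (hx₀ : Measurable x₀) (hx₀X : ∀ᵐ θ ∂μ, x₀ θ ∈ X θ) :
    (∀ᵐ θ ∂μ, ∀ y ∈ X θ, ⟪a, x₀ θ⟫ ≤ ⟪a, y⟫) ↔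
      ∀ x : α → E, Measurable x → (∀ᵐ θ ∂μ, x θ ∈ X θ) →
        ⟪a, ∫ θ, x₀ θ ∂μ⟫ ≤ ⟪a, ∫ θ, x θ ∂μ⟫ := by
  have hintegrable : ∀ x : α → E, Measurable x → (∀ᵐ θ ∂μ, x θ ∈ X θ) → Integrable x μ :=
    fun x hx hxX => .of_bound hx.aestronglyMeasurable M
      (hxX.mono fun θ hθ => mem_closedBall_zero_iff.1 (hXM θ hθ))
  have hinner_integral : ∀ x : α → E, Measurable x → (∀ᵐ θ ∂μ, x θ ∈ X θ) →
      ⟪a, ∫ θ, x θ ∂μ⟫ = ∫ θ, ⟪a, x θ⟫ ∂μ :=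
    fun x hx hxX => (integral_inner (hintegrable x hx hxX) a).symm
  constructor
  · intro h x hx hxX
    rw [hinner_integral x hx hxX, hinner_integral x₀ hx₀ hx₀X]
    exact integral_mono_ae ((hintegrable x₀ hx₀ hx₀X).const_inner a)
      ((hintegrable x hx hxX).const_inner a)
      (by filter_upwards [h, hxX] with θ hθ hxθ using hθ _ hxθ)
  · intro h
    by_contra hbad
    obtain ⟨x, hx, hxX, hle, hlt⟩ :=
      exists_measurable_ae_mem_inner_le_and_measure_lt_ne_zero hX a hx₀ hx₀X hbad
    have hVI := h x hx hxX
    rw [hinner_integral x hx hxX, hinner_integral x₀ hx₀ hx₀X] at hVI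
    exact hVI.not_gt (integral_lt_integral_of_ae_le_of_measure_setOf_lt_ne_zero
      ((hintegrable x hx hxX).const_inner a) ((hintegrable x₀ hx₀ hx₀X).const_inner a)
      (.of_forall hle) hlt)

end VariationalInequality

theorem statement5_general {T : ℕ} (M : ℝ)
    (X : ℝ → Set (EuclideanSpace ℝ (Fin T)))
    (hXball : ∀ θ, X θ ⊆ closedBall 0 M)
    (hXgraph : MeasurableSet {p : ℝ × EuclideanSpace ℝ (Fin T) | p.2 ∈ X p.1})
    (c : Fin T → ℝ → ℝ)
    (Xtilde : Set (EuclideanSpace ℝ (Fin T)))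
    (hXtilde : Xtilde = {Y | ∃ x : ℝ → EuclideanSpace ℝ (Fin T), Measurable x ∧
        (∀ᵐ θ ∂(volume.restrict (Icc (0:ℝ) 1)), x θ ∈ X θ) ∧
        Y = ∫ θ in Icc (0:ℝ) 1, x θ})
    (xstar : ℝ → EuclideanSpace ℝ (Fin T))
    (hmeas : Measurable xstar)
    (hfeas : ∀ᵐ θ ∂(volume.restrict (Icc (0:ℝ) 1)), xstar θ ∈ X θ)
    (Xagg : EuclideanSpace ℝ (Fin T))
    (hXagg : Xagg = ∫ θ in Icc (0:ℝ) 1, xstar θ) :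
    ((∀ᵐ θ ∂(volume.restrict (Icc (0:ℝ) 1)), ∀ y ∈ X θ,
        (∑ t, xstar θ t * c t (Xagg t)) ≤ (∑ t, y t * c t (Xagg t)))
      ↔
      (∀ Y ∈ Xtilde,
        0 ≤ ⟪((WithLp.equiv 2 (Fin T → ℝ)).symm fun t => c t (Xagg t)),
              Y - Xagg⟫)) := by
  set a : EuclideanSpace ℝ (Fin T) := (WithLp.equiv 2 (Fin T → ℝ)).symm fun t => c t (Xagg t)
  have hcost : ∀ y : EuclideanSpace ℝ (Fin T), ∑ t, y t * c t (Xagg t) = ⟪a, y⟫ := fun y => by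
    simp [a, PiLp.inner_apply, mul_comm]
  simp only [hcost, inner_sub_right, sub_nonneg]
  rw [ae_forall_inner_le_iff_forall_inner_integral_le hXgraph hXball a hmeas hfeas, hXtilde,
    ← hXagg]
  exact ⟨fun h _ ⟨x, hx, hxX, hY⟩ => hY ▸ h x hx hxX, fun h x hx hxX => h _ ⟨x, hx, hxX, rfl⟩⟩

/-- Aggregate variational formulation of a Wardrop equilibrium
without utilities (`u_θ ≡ 0`). Nonatomic routing game on `Θ = [0,1]` with `T`
parallel arcs: strategy sets `X θ` nonempty convex compact, in the nonnegative
orthant and in `B(0,M)`, measurable graph; costs `c t` differentiable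
(derivative `c' t`), convex, increasing. With the aggregate feasible set
`X̃ = {∫_Θ x_θ dθ : x measurable profile, x θ ∈ X θ a.e.}`, a measurable
profile `xstar` with `xstar θ ∈ X θ` a.e. and aggregate `Xagg = ∫_Θ xstar` is
a Wardrop equilibrium iff `⟪c(Xagg), Y - Xagg⟫ ≥ 0` for all `Y ∈ X̃`. -/
theorem statement5 {T : ℕ} (hT : 1 ≤ T) (M : ℝ) (hM : 0 < M)
    (X : ℝ → Set (EuclideanSpace ℝ (Fin T)))
    (hXne : ∀ θ, (X θ).Nonempty)
    (hXconv : ∀ θ, Convex ℝ (X θ))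
    (hXcpt : ∀ θ, IsCompact (X θ))
    (hXball : ∀ θ, X θ ⊆ closedBall 0 M)
    (hXpos : ∀ θ, ∀ x ∈ X θ, ∀ t, 0 ≤ x t)
    (hXgraph : MeasurableSet {p : ℝ × EuclideanSpace ℝ (Fin T) | p.2 ∈ X p.1})
    (c c' : Fin T → ℝ → ℝ)
    (hc : ∀ t s, HasDerivAt (c t) (c' t s) s)
    (hcconv : ∀ t, ConvexOn ℝ Set.univ (c t))
    (hcmono : ∀ t, StrictMono (c t))
    (Xtilde : Set (EuclideanSpace ℝ (Fin T)))
    (hXtilde : Xtilde = {Y | ∃ x : ℝ → EuclideanSpace ℝ (Fin T), Measurable x ∧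
        (∀ᵐ θ ∂(volume.restrict (Icc (0:ℝ) 1)), x θ ∈ X θ) ∧
        Y = ∫ θ in Icc (0:ℝ) 1, x θ})
    (xstar : ℝ → EuclideanSpace ℝ (Fin T))
    (hmeas : Measurable xstar)
    (hfeas : ∀ᵐ θ ∂(volume.restrict (Icc (0:ℝ) 1)), xstar θ ∈ X θ)
    (Xagg : EuclideanSpace ℝ (Fin T))
    (hXagg : Xagg = ∫ θ in Icc (0:ℝ) 1, xstar θ) :
    ((∀ᵐ θ ∂(volume.restrict (Icc (0:ℝ) 1)), ∀ y ∈ X θ,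
        (∑ t, xstar θ t * c t (Xagg t)) ≤ (∑ t, y t * c t (Xagg t)))
      ↔
      (∀ Y ∈ Xtilde,
        0 ≤ ⟪((WithLp.equiv 2 (Fin T → ℝ)).symm fun t => c t (Xagg t)),
              Y - Xagg⟫)) :=
  statement5_general M X hXball hXgraph c Xtilde hXtilde xstar hmeas hfeas Xagg hXagg
end

section
/- Closeness of Wardrop-equilibrium strategies of similar players: assume each c_t is differentiable, convex, increasing, with B_c := max_{x∈B(0,M)} ‖(c_t(x_t))_t‖₂; assume ‖∇u_ζ‖ ≤ Γ for all ζ, and that each u_ζ is α-strongly concave on B(0,M) for a common α > 0. Let x* be a Wardrop equilibrium with aggregate X*, and let θ, ξ ∈ [0,1] be two players at which the equilibrium variational inequality ⟨c(X*) − ∇u_ζ(x*_ζ), y − x*_ζ⟩ ≥ 0 (∀ y ∈ X_ζ) holds. If d_H(X_θ, X_ξ) ≤ δ and sup_{x∈B(0,M)} ‖∇u_θ(x) − ∇u_ξ(x)‖₂ ≤ d, then ‖x*_θ − x*_ξ‖₂² ≤ (2/α)·(M·d + (B_c + Γ)·δ). -/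
/-!
Each player's variational inequality, tested at a point of its own strategy set lying within `δ`
of the other player's equilibrium strategy (such a point exists by compactness and the Hausdorff
bound), costs at most `(B_c + Γ) δ`, since the tested vector `c(X*) - ∇u(x*)` has norm at most
`B_c + Γ` (the aggregate `X*` lies in `B(0,M)`). Adding the two inequalities gives
`⟪∇u_θ(x*_θ) - ∇u_ξ(x*_ξ), x*_θ - x*_ξ⟫ ≥ -2 (B_c + Γ) δ`. Splitting the gradient difference at
`∇u_θ(x*_ξ)`, strong concavity of `u_θ` bounds the first part by `-α ‖x*_θ - x*_ξ‖²` and the second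
is at most `d · 2M`.
-/

open scoped RealInnerProductSpace
open Metric Set MeasureTheory Filter Topology

section StrongConcavity

variable {E : Type*} [NormedAddCommGroup E] [InnerProductSpace ℝ E] [CompleteSpace E]
  {s : Set E} {α : ℝ} {f : E → ℝ} {a b ga gb : E}

lemma StrongConcaveOn.add_sq_le_add_inner (hf : StrongConcaveOn s α f) (ha : a ∈ s) (hb : b ∈ s)
    (hga : HasGradientAt f ga a) :
    f b + α / 2 * ‖a - b‖ ^ 2 ≤ f a + ⟪ga, b - a⟫ := by
  set g : ℝ → ℝ := fun τ ↦ f (a + τ • (b - a))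
  have hline : HasDerivAt (fun τ : ℝ ↦ a + τ • (b - a)) (b - a) 0 := by
    simpa using ((hasDerivAt_id (0 : ℝ)).smul_const (b - a)).const_add a
  have hg : HasDerivAt g ⟪ga, b - a⟫ 0 := by
    have hf' : HasFDerivAt f (InnerProductSpace.toDual ℝ E ga) (a + (0 : ℝ) • (b - a)) := by
      simpa using hga.hasFDerivAt
    exact hf'.comp_hasDerivAt 0 hline
  have hslope : Tendsto (slope g 0) (𝓝[>] 0) (𝓝 ⟪ga, b - a⟫) :=
    (hasDerivWithinAt_iff_tendsto_slope' (lt_irrefl 0)).1 hg.hasDerivWithinAt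
  have hbound : Tendsto (fun τ : ℝ ↦ f b - f a + (1 - τ) * (α / 2 * ‖a - b‖ ^ 2)) (𝓝[>] 0)
      (𝓝 (f b - f a + α / 2 * ‖a - b‖ ^ 2)) := by
    have : Continuous fun τ : ℝ ↦ f b - f a + (1 - τ) * (α / 2 * ‖a - b‖ ^ 2) := by fun_prop
    simpa using this.continuousWithinAt.tendsto (x := 0) (s := Ioi 0)
  -- Strong concavity along the chord bounds the difference quotients of `g` at `0⁺` from below.
  have hle : ∀ᶠ τ in 𝓝[>] (0 : ℝ),
      f b - f a + (1 - τ) * (α / 2 * ‖a - b‖ ^ 2) ≤ slope g 0 τ := by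
    filter_upwards [Ioo_mem_nhdsGT (zero_lt_one' ℝ)] with τ ⟨hτ0, hτ1⟩
    have hchord := hf.2 ha hb (sub_nonneg.2 hτ1.le) hτ0.le (sub_add_cancel 1 τ)
    rw [show (1 - τ) • a + τ • b = a + τ • (b - a) by module, smul_eq_mul, smul_eq_mul] at hchord
    rw [slope_def_field, sub_zero, le_div_iff₀ hτ0]
    simp only [g, zero_smul, add_zero]
    nlinarith
  linarith [le_of_tendsto_of_tendsto hbound hslope hle]

lemma StrongConcaveOn.inner_sub_le (hf : StrongConcaveOn s α f) (ha : a ∈ s) (hb : b ∈ s)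
    (hga : HasGradientAt f ga a) (hgb : HasGradientAt f gb b) :
    ⟪ga - gb, a - b⟫ ≤ -(α * ‖a - b‖ ^ 2) := by
  have hab := hf.add_sq_le_add_inner ha hb hga
  have hba := hf.add_sq_le_add_inner hb ha hgb
  rw [← neg_sub a b, inner_neg_right] at hab
  rw [norm_sub_rev] at hba
  rw [inner_sub_left]
  linarith

end StrongConcavity

lemma IsCompact.exists_mem_dist_le_hausdorffDist {X : Type*} [PseudoMetricSpace X] {s t : Set X}
    (hs : IsCompact s) (ht : Bornology.IsBounded t) {x : X} (hx : x ∈ t) (hsne : s.Nonempty) :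
    ∃ y ∈ s, dist x y ≤ hausdorffDist s t := by
  obtain ⟨y, hy, hxy⟩ := hs.exists_infDist_eq_dist hsne x
  refine ⟨y, hy, hxy ▸ ?_⟩
  rw [hausdorffDist_comm]
  exact infDist_le_hausdorffDist_of_mem hx
    (hausdorffEDist_ne_top_of_nonempty_of_bounded ⟨x, hx⟩ hsne ht hs.isBounded)

lemma neg_mul_le_inner_sub_of_dist_le {E : Type*} [NormedAddCommGroup E] [InnerProductSpace ℝ E]
    {g a b y : E} {C δ : ℝ} (hy : 0 ≤ ⟪g, y - a⟫) (hyb : dist b y ≤ δ) (hg : ‖g‖ ≤ C) :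
    -(C * δ) ≤ ⟪g, b - a⟫ := by
  have hsplit : ⟪g, y - a⟫ = ⟪g, b - a⟫ + ⟪g, y - b⟫ := by
    rw [← inner_add_right, sub_add_sub_cancel']
  have hyb' : ⟪g, y - b⟫ ≤ C * δ := calc
    ⟪g, y - b⟫ ≤ ‖g‖ * ‖y - b‖ := real_inner_le_norm _ _
    _ ≤ C * δ := by
      rw [← dist_eq_norm, dist_comm]
      exact mul_le_mul hg hyb dist_nonneg ((norm_nonneg g).trans hg)
  linarith

theorem statement12_general {T : ℕ} (M Γ α Bc δ d : ℝ)
    (hα : 0 < α)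
    (X : ℝ → Set (EuclideanSpace ℝ (Fin T)))
    (hXcpt : ∀ ζ, IsCompact (X ζ))
    (hXball : ∀ ζ, X ζ ⊆ closedBall 0 M)
    (c : Fin T → ℝ → ℝ)
    (hBc : ∀ x : EuclideanSpace ℝ (Fin T), x ∈ closedBall 0 M →
      ‖((WithLp.equiv 2 (Fin T → ℝ)).symm fun t => c t (x t))‖ ≤ Bc)
    (u : ℝ → EuclideanSpace ℝ (Fin T) → ℝ)
    (gu : ℝ → EuclideanSpace ℝ (Fin T) → EuclideanSpace ℝ (Fin T))
    (hu : ∀ ζ x, HasGradientAt (u ζ) (gu ζ x) x)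
    (hgubd : ∀ ζ x, ‖gu ζ x‖ ≤ Γ)
    (hstrong : ∀ ζ, StrongConcaveOn (closedBall 0 M) α (u ζ))
    -- the Wardrop equilibrium profile and its aggregate
    (xstar : ℝ → EuclideanSpace ℝ (Fin T))
    (hfeas : ∀ᵐ ζ ∂(volume.restrict (Icc (0:ℝ) 1)), xstar ζ ∈ X ζ)
    (Xagg : EuclideanSpace ℝ (Fin T))
    (hXagg : Xagg = ∫ ζ in Icc (0:ℝ) 1, xstar ζ)
    -- the two players at which the equilibrium variational inequality holds
    (θ ξ : ℝ)
    (hθfeas : xstar θ ∈ X θ) (hξfeas : xstar ξ ∈ X ξ)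
    (hθVI : ∀ y ∈ X θ,
      0 ≤ ⟪((WithLp.equiv 2 (Fin T → ℝ)).symm fun t => c t (Xagg t))
            - gu θ (xstar θ), y - xstar θ⟫)
    (hξVI : ∀ y ∈ X ξ,
      0 ≤ ⟪((WithLp.equiv 2 (Fin T → ℝ)).symm fun t => c t (Xagg t))
            - gu ξ (xstar ξ), y - xstar ξ⟫)
    -- similarity of the two players
    (hXdist : hausdorffDist (X θ) (X ξ) ≤ δ)
    (hudist : ∀ x ∈ closedBall (0 : EuclideanSpace ℝ (Fin T)) M,
      ‖gu θ x - gu ξ x‖ ≤ d) :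
    ‖xstar θ - xstar ξ‖ ^ 2 ≤ (2 / α) * (M * d + (Bc + Γ) * δ) := by
  set w := (WithLp.equiv 2 (Fin T → ℝ)).symm fun t => c t (Xagg t)
  set a := xstar θ
  set b := xstar ξ
  have ha : a ∈ closedBall 0 M := hXball θ hθfeas
  have hb : b ∈ closedBall 0 M := hXball ξ hξfeas
  have hXagg_mem : Xagg ∈ closedBall 0 M := by
    rw [mem_closedBall_zero_iff, hXagg]
    simpa using norm_setIntegral_le_of_norm_le_const_ae (by simp)
      (hfeas.mono fun ζ hζ ↦ mem_closedBall_zero_iff.1 (hXball ζ hζ))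
  have hw : ‖w‖ ≤ Bc := hBc Xagg hXagg_mem
  obtain ⟨yθ, hyθ, hbyθ⟩ := (hXcpt θ).exists_mem_dist_le_hausdorffDist
    (hXcpt ξ).isBounded hξfeas ⟨a, hθfeas⟩
  obtain ⟨yξ, hyξ, hayξ⟩ := (hXcpt ξ).exists_mem_dist_le_hausdorffDist
    (hXcpt θ).isBounded hθfeas ⟨b, hξfeas⟩
  rw [hausdorffDist_comm] at hayξ
  have hVIθ := neg_mul_le_inner_sub_of_dist_le (hθVI yθ hyθ) (hbyθ.trans hXdist)
    (norm_sub_le_of_le hw (hgubd θ a))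
  have hVIξ := neg_mul_le_inner_sub_of_dist_le (hξVI yξ hyξ) (hayξ.trans hXdist)
    (norm_sub_le_of_le hw (hgubd ξ b))
  have hmono := (hstrong θ).inner_sub_le ha hb (hu θ a) (hu θ b)
  have hsim : ⟪gu θ b - gu ξ b, a - b⟫ ≤ d * (M + M) := calc
    ⟪gu θ b - gu ξ b, a - b⟫ ≤ ‖gu θ b - gu ξ b‖ * ‖a - b‖ := real_inner_le_norm _ _
    _ ≤ d * (M + M) := mul_le_mul (hudist b hb)
        (norm_sub_le_of_le (mem_closedBall_zero_iff.1 ha) (mem_closedBall_zero_iff.1 hb))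
        (norm_nonneg _) ((norm_nonneg _).trans (hudist b hb))
  have hsum : ⟪w - gu θ a, b - a⟫ + ⟪w - gu ξ b, a - b⟫
      = ⟪gu θ a - gu θ b, a - b⟫ + ⟪gu θ b - gu ξ b, a - b⟫ := by
    simp only [inner_sub_left, inner_sub_right]
    ring
  rw [div_mul_eq_mul_div, le_div_iff₀ hα]
  linarith

/-- Closeness of Wardrop-equilibrium strategies of similar
players. Nonatomic routing game on `Θ = [0,1]` with `T` parallel arcs:
strategy sets `X ζ` nonempty convex compact, in the nonnegative orthant and
in `B(0,M)`; costs `c t` differentiable (derivative `c' t`), convex,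
increasing, with `Bc` bounding `‖(c t (x t))_t‖` on `B(0,M)`; utilities `u ζ`
differentiable (gradient `gu ζ`) with `‖∇u_ζ‖ ≤ Γ` and `α`-strongly concave
on `B(0,M)`. Let `xstar` be a Wardrop equilibrium with aggregate `Xagg`, and
`θ, ξ ∈ [0,1]` two players at which the equilibrium variational inequality
holds. If `d_H(X θ, X ξ) ≤ δ` and `‖∇u_θ - ∇u_ξ‖ ≤ d` on `B(0,M)`, then
`‖xstar θ - xstar ξ‖² ≤ (2/α) * (M * d + (Bc + Γ) * δ)`. -/
theorem statement12 {T : ℕ} (hT : 1 ≤ T) (M Γ α Bc δ d : ℝ)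
    (hM : 0 < M) (hα : 0 < α)
    (X : ℝ → Set (EuclideanSpace ℝ (Fin T)))
    (hXne : ∀ ζ, (X ζ).Nonempty)
    (hXconv : ∀ ζ, Convex ℝ (X ζ))
    (hXcpt : ∀ ζ, IsCompact (X ζ))
    (hXball : ∀ ζ, X ζ ⊆ closedBall 0 M)
    (hXpos : ∀ ζ, ∀ x ∈ X ζ, ∀ t, 0 ≤ x t)
    (c c' : Fin T → ℝ → ℝ)
    (hc : ∀ t s, HasDerivAt (c t) (c' t s) s)
    (hcconv : ∀ t, ConvexOn ℝ Set.univ (c t))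
    (hcmono : ∀ t, StrictMono (c t))
    (hBc : ∀ x : EuclideanSpace ℝ (Fin T), x ∈ closedBall 0 M →
      ‖((WithLp.equiv 2 (Fin T → ℝ)).symm fun t => c t (x t))‖ ≤ Bc)
    (u : ℝ → EuclideanSpace ℝ (Fin T) → ℝ)
    (gu : ℝ → EuclideanSpace ℝ (Fin T) → EuclideanSpace ℝ (Fin T))
    (hu : ∀ ζ x, HasGradientAt (u ζ) (gu ζ x) x)
    (hgubd : ∀ ζ x, ‖gu ζ x‖ ≤ Γ)
    (hstrong : ∀ ζ, StrongConcaveOn (closedBall 0 M) α (u ζ))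
    -- the Wardrop equilibrium profile and its aggregate
    (xstar : ℝ → EuclideanSpace ℝ (Fin T))
    (hmeas : Measurable xstar)
    (hfeas : ∀ᵐ ζ ∂(volume.restrict (Icc (0:ℝ) 1)), xstar ζ ∈ X ζ)
    (Xagg : EuclideanSpace ℝ (Fin T))
    (hXagg : Xagg = ∫ ζ in Icc (0:ℝ) 1, xstar ζ)
    -- the two players at which the equilibrium variational inequality holds
    (θ ξ : ℝ) (hθ : θ ∈ Icc (0:ℝ) 1) (hξ : ξ ∈ Icc (0:ℝ) 1)
    (hθfeas : xstar θ ∈ X θ) (hξfeas : xstar ξ ∈ X ξ)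
    (hθVI : ∀ y ∈ X θ,
      0 ≤ ⟪((WithLp.equiv 2 (Fin T → ℝ)).symm fun t => c t (Xagg t))
            - gu θ (xstar θ), y - xstar θ⟫)
    (hξVI : ∀ y ∈ X ξ,
      0 ≤ ⟪((WithLp.equiv 2 (Fin T → ℝ)).symm fun t => c t (Xagg t))
            - gu ξ (xstar ξ), y - xstar ξ⟫)
    -- similarity of the two players
    (hXdist : hausdorffDist (X θ) (X ξ) ≤ δ)
    (hudist : ∀ x ∈ closedBall (0 : EuclideanSpace ℝ (Fin T)) M,
      ‖gu θ x - gu ξ x‖ ≤ d) :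
    ‖xstar θ - xstar ξ‖ ^ 2 ≤ (2 / α) * (M * d + (Bc + Γ) * δ) :=
  statement12_general M Γ α Bc δ d hα X hXcpt hXball c hBc u gu hu hgubd hstrong xstar hfeas Xagg
    hXagg θ ξ hθfeas hξfeas hθVI hξVI hXdist hudist
end

section
/- Continuity of the Wardrop equilibrium at continuity points of the game: assume each c_t is differentiable, convex and increasing, ‖∇u_θ‖ ≤ Γ for all θ, and each u_θ is α-strongly concave on B(0,M) for a common α > 0. Say the game is continuous at θ₀ ∈ [0,1] if for every ε > 0 there is η > 0 such that |θ₀ − θ′| ≤ η implies d_H(X_{θ₀}, X_{θ′}) ≤ ε and sup_{x ∈ B(0,M)} ‖∇u_{θ₀}(x) − ∇u_{θ′}(x)‖₂ ≤ ε. Let x* be a profile satisfying the Wardrop variational inequality ⟨c(X*) − ∇u_θ(x*_θ), y − x*_θ⟩ ≥ 0 for all y ∈ X_θ at EVERY θ ∈ [0,1], where X* = ∫_Θ x*_θ dθ. If the game is continuous at θ₀, then θ ↦ x*_θ is continuous at θ₀. -/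
/-!
Write `F = c(X*)`, `x = x*_θ` and `x₀ = x*_θ₀`. Strong concavity of `u_θ₀` makes its gradient strongly
antitone: `α ‖x - x₀‖² ≤ ⟪∇u_θ₀ x - ∇u_θ₀ x₀, x₀ - x⟫`. When `X_θ₀` and `X_θ` are `δ`-close, test the
variational inequality at `θ` with a point of `X_θ` near `x₀` and the one at `θ₀` with a point of
`X_θ₀` near `x`, and trade `∇u_θ₀ x` for `∇u_θ x`: each error term is at most `δ` times a constant
built from `‖F‖`, `Γ` and `M`, so `α ‖x - x₀‖² = O(δ)`.
-/

open scoped RealInnerProductSpace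
open Metric Set Filter Topology

/-- On the segment from `x` to `y`, `f` is a concave function of one variable: its derivative at `0`
dominates the secant slope, which dominates its derivative at `1`. -/
theorem ConcaveOn.hasFDerivAt_apply_sub_le {E : Type*} [NormedAddCommGroup E] [NormedSpace ℝ E]
    {s : Set E} {f : E → ℝ} {f'x f'y : E →L[ℝ] ℝ} {x y : E} (hf : ConcaveOn ℝ s f)
    (hx : x ∈ s) (hy : y ∈ s) (hfx : HasFDerivAt f f'x x) (hfy : HasFDerivAt f f'y y) :
    f'y (y - x) ≤ f'x (y - x) := by
  have hline : ConcaveOn ℝ (AffineMap.lineMap x y ⁻¹' s) (f ∘ AffineMap.lineMap x y) :=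
    hf.comp_affineMap _
  have h0 : (0 : ℝ) ∈ AffineMap.lineMap x y ⁻¹' s := by simpa using hx
  have h1 : (1 : ℝ) ∈ AffineMap.lineMap x y ⁻¹' s := by simpa using hy
  have hderiv : ∀ {τ : ℝ} {z : E} {f'z : E →L[ℝ] ℝ}, AffineMap.lineMap x y τ = z →
      HasFDerivAt f f'z z → HasDerivAt (f ∘ AffineMap.lineMap x y) (f'z (y - x)) τ := by
    rintro τ z f'z rfl hfz
    exact hfz.comp_hasDerivAt τ AffineMap.hasDerivAt_lineMap
  exact (hline.le_slope_of_hasDerivAt h0 h1 one_pos (hderiv (by simp) hfy)).trans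
    (hline.slope_le_of_hasDerivAt h0 h1 one_pos (hderiv (by simp) hfx))

/-- `f + α/2 ‖·‖²` is concave, with gradient `gx + α • x` at `x`. -/
theorem StrongConcaveOn.mul_norm_sub_sq_le_inner_gradient_sub {E : Type*}
    [NormedAddCommGroup E] [InnerProductSpace ℝ E] [CompleteSpace E]
    {s : Set E} {α : ℝ} {f : E → ℝ} {x y gx gy : E} (hf : StrongConcaveOn s α f)
    (hx : x ∈ s) (hy : y ∈ s) (hgx : HasGradientAt f gx x) (hgy : HasGradientAt f gy y) :
    α * ‖x - y‖ ^ 2 ≤ ⟪gx - gy, y - x⟫ := by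
  have hconc := strongConcaveOn_iff_convex.mp hf
  have hderiv : ∀ {z gz : E}, HasGradientAt f gz z →
      HasFDerivAt (fun w => f w + α / 2 * ‖w‖ ^ 2)
        (InnerProductSpace.toDual ℝ E gz + (α / 2) • (2 • innerSL ℝ z)) z :=
    fun hgz => hgz.hasFDerivAt.add ((hasStrictFDerivAt_norm_sq _).hasFDerivAt.const_mul _)
  have key := hconc.hasFDerivAt_apply_sub_le hx hy (hderiv hgx) (hderiv hgy)
  simp only [add_apply, smul_apply,
    InnerProductSpace.toDual_apply_apply, innerSL_apply_apply, smul_eq_mul, nsmul_eq_mul] at key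
  have hsq : ‖x - y‖ ^ 2 = ⟪y, y - x⟫ - ⟪x, y - x⟫ := by
    rw [norm_sub_rev, ← real_inner_self_eq_norm_sq, inner_sub_left]
  rw [hsq, inner_sub_left]
  linarith

theorem sq_norm_sub_le_of_variationalInequality {E : Type*} [NormedAddCommGroup E]
    [InnerProductSpace ℝ E] {G G₀ : E → E} {S S₀ : Set E} {F x x₀ y y₀ : E} {α K D δ : ℝ}
    (hvi : ∀ z ∈ S, 0 ≤ ⟪F - G x, z - x⟫) (hvi₀ : ∀ z ∈ S₀, 0 ≤ ⟪F - G₀ x₀, z - x₀⟫)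
    (hy : y ∈ S) (hy₀ : y₀ ∈ S₀) (hx₀y : ‖x₀ - y‖ ≤ δ) (hxy₀ : ‖x - y₀‖ ≤ δ)
    (hmono : α * ‖x - x₀‖ ^ 2 ≤ ⟪G₀ x - G₀ x₀, x₀ - x⟫) (hG : ‖G₀ x - G x‖ ≤ δ)
    (hK : ‖F - G x‖ ≤ K) (hK₀ : ‖F - G₀ x₀‖ ≤ K) (hD : ‖x - x₀‖ ≤ D) :
    α * ‖x - x₀‖ ^ 2 ≤ δ * (2 * K + D) := by
  have hbound : ∀ {a b : E} {A B : ℝ}, ‖a‖ ≤ A → ‖b‖ ≤ B → |⟪a, b⟫| ≤ A * B :=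
    fun ha hb => (abs_real_inner_le_norm _ _).trans
      (mul_le_mul ha hb (norm_nonneg _) ((norm_nonneg _).trans ha))
  have h : -(K * δ) ≤ ⟪F - G x, x₀ - x⟫ := by
    rw [show x₀ - x = (y - x) + (x₀ - y) by abel, inner_add_right]
    linarith [hvi y hy, (abs_le.mp (hbound hK hx₀y)).1]
  have h₀ : -(K * δ) ≤ ⟪F - G₀ x₀, x - x₀⟫ := by
    rw [show x - x₀ = (y₀ - x₀) + (x - y₀) by abel, inner_add_right]
    linarith [hvi₀ y₀ hy₀, (abs_le.mp (hbound hK₀ hxy₀)).1]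
  have hpert : ⟪G₀ x - G x, x₀ - x⟫ ≤ δ * D :=
    (abs_le.mp (hbound hG ((norm_sub_rev x₀ x).trans_le hD))).2
  have hsplit : ⟪G₀ x - G₀ x₀, x₀ - x⟫
      = ⟪G₀ x - G x, x₀ - x⟫ - ⟪F - G x, x₀ - x⟫ - ⟪F - G₀ x₀, x - x₀⟫ := by
    simp only [inner_sub_left, inner_sub_right]
    ring
  linarith

theorem tendsto_of_forall_eventually_sq_norm_sub_le {ι E : Type*} [SeminormedAddCommGroup E]
    {l : Filter ι} {f : ι → E} {a : E} {C : ℝ}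
    (h : ∀ δ > 0, ∀ᶠ i in l, ‖f i - a‖ ^ 2 ≤ C * δ) : Tendsto f l (𝓝 a) := by
  rw [Metric.tendsto_nhds]
  intro ε hε
  have hC : 0 < |C| + 1 := by positivity
  filter_upwards [h (ε ^ 2 / (|C| + 1)) (by positivity)] with i hi
  have hlt : C * (ε ^ 2 / (|C| + 1)) < ε ^ 2 := by
    rw [mul_div_assoc', div_lt_iff₀ hC]
    nlinarith [le_abs_self C, sq_pos_of_pos hε]
  rw [dist_eq_norm]
  exact lt_of_pow_lt_pow_left₀ 2 hε.le (hi.trans_lt hlt)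

theorem statement13_general {T : ℕ} (M Γ α : ℝ) (hα : 0 < α)
    (X : ℝ → Set (EuclideanSpace ℝ (Fin T)))
    (hXball : ∀ θ, X θ ⊆ closedBall 0 M)
    (c : Fin T → ℝ → ℝ)
    (u : ℝ → EuclideanSpace ℝ (Fin T) → ℝ)
    (gu : ℝ → EuclideanSpace ℝ (Fin T) → EuclideanSpace ℝ (Fin T))
    (hu : ∀ θ x, HasGradientAt (u θ) (gu θ x) x)
    (hgubd : ∀ θ x, ‖gu θ x‖ ≤ Γ)
    (hstrong : ∀ θ, StrongConcaveOn (closedBall 0 M) α (u θ))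
    (xstar : ℝ → EuclideanSpace ℝ (Fin T))
    (hfeas : ∀ θ ∈ Icc (0:ℝ) 1, xstar θ ∈ X θ)
    (Xagg : EuclideanSpace ℝ (Fin T))
    (hVI : ∀ θ ∈ Icc (0:ℝ) 1, ∀ y ∈ X θ,
      0 ≤ ⟪((WithLp.equiv 2 (Fin T → ℝ)).symm fun t => c t (Xagg t))
            - gu θ (xstar θ), y - xstar θ⟫)
    (θ₀ : ℝ) (hθ₀ : θ₀ ∈ Icc (0:ℝ) 1)
    (hcont : ∀ ε > (0:ℝ), ∃ η > (0:ℝ), ∀ θ' ∈ Icc (0:ℝ) 1, |θ₀ - θ'| ≤ η →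
      hausdorffDist (X θ₀) (X θ') ≤ ε ∧
      ∀ x ∈ closedBall (0 : EuclideanSpace ℝ (Fin T)) M,
        ‖gu θ₀ x - gu θ' x‖ ≤ ε) :
    ContinuousWithinAt xstar (Icc (0:ℝ) 1) θ₀ := by
  set F := (WithLp.equiv 2 (Fin T → ℝ)).symm fun t => c t (Xagg t)
  have hK : ∀ θ x, ‖F - gu θ x‖ ≤ ‖F‖ + Γ := fun θ x =>
    (norm_sub_le _ _).trans (add_le_add_right (hgubd θ x) _)
  have hball : ∀ θ ∈ Icc (0:ℝ) 1, xstar θ ∈ closedBall 0 M := fun θ hθ => hXball θ (hfeas θ hθ)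
  have hdiam : ∀ θ ∈ Icc (0:ℝ) 1, ‖xstar θ - xstar θ₀‖ ≤ 2 * M := fun θ hθ =>
    (norm_sub_le _ _).trans (by
      linarith [mem_closedBall_zero_iff.mp (hball θ hθ), mem_closedBall_zero_iff.mp (hball θ₀ hθ₀)])
  refine tendsto_of_forall_eventually_sq_norm_sub_le
    (C := 2 * (2 * (‖F‖ + Γ) + 2 * M) / α) fun δ hδ => ?_
  obtain ⟨η, hη, hclose⟩ := hcont δ hδ
  filter_upwards [self_mem_nhdsWithin, nhdsWithin_le_nhds (closedBall_mem_nhds θ₀ hη)]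
    with θ hθ hθη
  obtain ⟨hH, hgrad⟩ := hclose θ hθ (by rwa [abs_sub_comm, ← Real.dist_eq])
  have hfin : hausdorffEDist (X θ₀) (X θ) ≠ ⊤ :=
    hausdorffEDist_ne_top_of_nonempty_of_bounded ⟨_, hfeas θ₀ hθ₀⟩ ⟨_, hfeas θ hθ⟩
      (isBounded_closedBall.subset (hXball θ₀)) (isBounded_closedBall.subset (hXball θ))
  have hlt : hausdorffDist (X θ₀) (X θ) < 2 * δ := by linarith
  obtain ⟨y, hy, hx₀y⟩ := exists_dist_lt_of_hausdorffDist_lt (hfeas θ₀ hθ₀) hlt hfin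
  obtain ⟨y₀, hy₀, hxy₀⟩ := exists_dist_lt_of_hausdorffDist_lt' (hfeas θ hθ) hlt hfin
  rw [dist_eq_norm] at hx₀y
  rw [dist_eq_norm'] at hxy₀
  have hmono := (hstrong θ₀).mul_norm_sub_sq_le_inner_gradient_sub (hball θ hθ) (hball θ₀ hθ₀)
    (hu θ₀ (xstar θ)) (hu θ₀ (xstar θ₀))
  have hmain := sq_norm_sub_le_of_variationalInequality (hVI θ hθ) (hVI θ₀ hθ₀) hy hy₀
    hx₀y.le hxy₀.le hmono
    ((hgrad _ (hball θ hθ)).trans (by linarith : δ ≤ 2 * δ)) (hK θ _) (hK θ₀ _) (hdiam θ hθ)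
  rw [div_mul_eq_mul_div, le_div_iff₀ hα]
  linarith

/-- Continuity of the Wardrop equilibrium at continuity points
of the game. Nonatomic routing game on `Θ = [0,1]` with `T` parallel arcs:
strategy sets `X θ` nonempty convex compact, in the nonnegative orthant and
in `B(0,M)`; costs `c t` differentiable (derivative `c' t`), convex,
increasing; utilities `u θ` differentiable (gradient `gu θ`) with
`‖∇u_θ‖ ≤ Γ` and `α`-strongly concave on `B(0,M)`. Suppose the profile
`xstar` satisfies `xstar θ ∈ X θ` and the Wardrop variational inequality at
EVERY `θ ∈ [0,1]`, with aggregate `Xagg = ∫_Θ xstar`. If the game is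
continuous at `θ₀ ∈ [0,1]` (for every `ε > 0` there is `η > 0` such that
`|θ₀ - θ'| ≤ η` implies `d_H(X θ₀, X θ') ≤ ε` and
`‖∇u_{θ₀} - ∇u_{θ'}‖ ≤ ε` on `B(0,M)`), then `θ ↦ xstar θ` is continuous
at `θ₀` (within `[0,1]`). -/
theorem statement13 {T : ℕ} (hT : 1 ≤ T) (M Γ α : ℝ) (hM : 0 < M) (hα : 0 < α)
    (X : ℝ → Set (EuclideanSpace ℝ (Fin T)))
    (hXne : ∀ θ, (X θ).Nonempty)
    (hXconv : ∀ θ, Convex ℝ (X θ))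
    (hXcpt : ∀ θ, IsCompact (X θ))
    (hXball : ∀ θ, X θ ⊆ closedBall 0 M)
    (hXpos : ∀ θ, ∀ x ∈ X θ, ∀ t, 0 ≤ x t)
    (c c' : Fin T → ℝ → ℝ)
    (hc : ∀ t s, HasDerivAt (c t) (c' t s) s)
    (hcconv : ∀ t, ConvexOn ℝ Set.univ (c t))
    (hcmono : ∀ t, StrictMono (c t))
    (u : ℝ → EuclideanSpace ℝ (Fin T) → ℝ)
    (gu : ℝ → EuclideanSpace ℝ (Fin T) → EuclideanSpace ℝ (Fin T))
    (hu : ∀ θ x, HasGradientAt (u θ) (gu θ x) x)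
    (hgubd : ∀ θ x, ‖gu θ x‖ ≤ Γ)
    (hstrong : ∀ θ, StrongConcaveOn (closedBall 0 M) α (u θ))
    (xstar : ℝ → EuclideanSpace ℝ (Fin T))
    (hmeas : Measurable xstar)
    (hfeas : ∀ θ ∈ Icc (0:ℝ) 1, xstar θ ∈ X θ)
    (Xagg : EuclideanSpace ℝ (Fin T))
    (hXagg : Xagg = ∫ θ in Icc (0:ℝ) 1, xstar θ)
    (hVI : ∀ θ ∈ Icc (0:ℝ) 1, ∀ y ∈ X θ,
      0 ≤ ⟪((WithLp.equiv 2 (Fin T → ℝ)).symm fun t => c t (Xagg t))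
            - gu θ (xstar θ), y - xstar θ⟫)
    (θ₀ : ℝ) (hθ₀ : θ₀ ∈ Icc (0:ℝ) 1)
    (hcont : ∀ ε > (0:ℝ), ∃ η > (0:ℝ), ∀ θ' ∈ Icc (0:ℝ) 1, |θ₀ - θ'| ≤ η →
      hausdorffDist (X θ₀) (X θ') ≤ ε ∧
      ∀ x ∈ closedBall (0 : EuclideanSpace ℝ (Fin T)) M,
        ‖gu θ₀ x - gu θ' x‖ ≤ ε) :
    ContinuousWithinAt xstar (Icc (0:ℝ) 1) θ₀ :=
  statement13_general M Γ α hα X hXball c u gu hu hgubd hstrong xstar hfeas Xagg hVI θ₀ hθ₀ hcont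
end

section
/- Lipschitz dependence of polyhedra on the right-hand side: let A be a real K×T matrix and for b ∈ ℝ^K define Λ_b := {x ∈ ℝ^T : A·x ≤ b (componentwise)}. Let B ⊆ ℝ^K be a compact set such that Λ_b is nonempty and bounded for every b ∈ B. Then there exists a constant C₀ > 0 such that for all b, b′ ∈ B: d_H(Λ_b, Λ_{b′}) ≤ C₀·‖b − b′‖. -/
open scoped RealInnerProductSpace BigOperators
open Metric Set

/-!
This is Hoffman's error bound for the system `⟪a j, x⟫ ≤ b j`, with `a j` the rows of `A`.
Let `y` be the projection of a point `x ∈ Λ b'` onto `Λ b`. Every direction that keeps the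
constraints active at `y` satisfied is feasible for a short time, so `x - y` lies in the double
dual of the active normals. On that closed cone the positively homogeneous function
`v ↦ ∑ max ⟪a j, v⟫ 0` (over the active `j`) vanishes only at `0`, hence, by compactness of the
unit sphere, dominates a multiple of `‖v‖`. At `v = x - y` it is at most `K * max_j (b' j - b j)`,
and there are only finitely many active sets.
-/

open Filter Topology

section Cone

variable {E : Type*} [NormedAddCommGroup E] [InnerProductSpace ℝ E] [FiniteDimensional ℝ E]

theorem ProperCone.exists_norm_le_mul_of_pos (K : ProperCone ℝ E) {φ : E → ℝ}
    (hφ : Continuous φ) (hhom : ∀ (r : ℝ) v, 0 ≤ r → φ (r • v) = r * φ v)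
    (hpos : ∀ v ∈ K, v ≠ 0 → 0 < φ v) :
    ∃ c > 0, ∀ v ∈ K, ‖v‖ ≤ c * φ v := by
  have hφ0 : φ 0 = 0 := by simpa using hhom 0 0 le_rfl
  set S := (K : Set E) ∩ sphere 0 1
  have hS : IsCompact S := (isCompact_sphere 0 1).inter_left K.isClosed
  have hnormalize : ∀ v ∈ K, v ≠ 0 → ‖v‖⁻¹ • v ∈ S := fun v hv hv0 =>
    ⟨K.smul_mem hv (by positivity), by simp [norm_smul, norm_ne_zero_iff.2 hv0]⟩
  rcases S.eq_empty_or_nonempty with hSe | hSne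
  · refine ⟨1, one_pos, fun v hv => ?_⟩
    obtain rfl : v = 0 := by
      by_contra hv0
      exact (hSe ▸ hnormalize v hv hv0 : _ ∈ (∅ : Set E))
    simp [hφ0]
  obtain ⟨u, ⟨huK, hu1⟩, hmin⟩ := hS.exists_isMinOn hSne hφ.continuousOn
  have hm : 0 < φ u := hpos u huK (ne_zero_of_mem_sphere one_ne_zero ⟨u, hu1⟩)
  refine ⟨(φ u)⁻¹, inv_pos.2 hm, fun v hv => ?_⟩
  rcases eq_or_ne v 0 with rfl | hv0
  · simp [hφ0]
  have hle : φ u ≤ ‖v‖⁻¹ * φ v := by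
    simpa [hhom _ _ (inv_nonneg.2 (norm_nonneg v))] using hmin (hnormalize v hv hv0)
  rw [le_inv_mul_iff₀ hm]
  rwa [le_inv_mul_iff₀ (norm_pos_iff.2 hv0), mul_comm] at hle

end Cone

section Polyhedron

variable {ι E : Type*} [NormedAddCommGroup E] [InnerProductSpace ℝ E]

def polyhedron (a : ι → E) (b : ι → ℝ) : Set E := {z | ∀ j, ⟪a j, z⟫ ≤ b j}

variable (a : ι → E) (b : ι → ℝ)

theorem isClosed_polyhedron : IsClosed (polyhedron a b) := by
  simp only [polyhedron, ofPred_forall]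
  exact isClosed_iInter fun j => isClosed_le (continuous_const.inner continuous_id) continuous_const

theorem convex_polyhedron : Convex ℝ (polyhedron a b) := by
  intro y hy z hz s t hs ht hst j
  rw [inner_add_right, real_inner_smul_right, real_inner_smul_right]
  calc s * ⟪a j, y⟫ + t * ⟪a j, z⟫ ≤ s * b j + t * b j := by gcongr <;> [exact hy j; exact hz j]
    _ = b j := by rw [← add_mul, hst, one_mul]

variable {a b}

theorem eventually_add_smul_mem_polyhedron [Finite ι] {y d : E} (hy : y ∈ polyhedron a b)
    (hd : ∀ j, ⟪a j, y⟫ = b j → ⟪a j, d⟫ ≤ 0) :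
    ∀ᶠ ε in 𝓝[>] (0 : ℝ), y + ε • d ∈ polyhedron a b := by
  simp only [polyhedron, mem_ofPred_eq, inner_add_right, real_inner_smul_right]
  refine eventually_all.2 fun j => ?_
  rcases (hy j).eq_or_lt with hj | hj
  · filter_upwards [self_mem_nhdsWithin] with ε hε
    nlinarith [hd j hj, mem_Ioi.1 hε]
  · have hcont : Continuous fun ε : ℝ => ⟪a j, y⟫ + ε * ⟪a j, d⟫ := by fun_prop
    refine nhdsWithin_le_nhds ((hcont.tendsto' 0 _ (by simp)).eventually_lt_const hj |>.mono ?_)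
    exact fun _ => le_of_lt

end Polyhedron

section Hoffman

variable {ι E : Type*} [NormedAddCommGroup E] [InnerProductSpace ℝ E] [FiniteDimensional ℝ E]
  (a : ι → E)

-- By Farkas' lemma this double dual is the cone spanned by the `a j`, `j ∈ J`.
open ProperCone in
theorem exists_norm_le_mul_sum_max_inner (J : Finset ι) :
    ∃ c > 0, ∀ v ∈ innerDual (innerDual (a '' J) : Set E), ‖v‖ ≤ c * ∑ j ∈ J, max ⟪a j, v⟫ 0 := by
  refine (innerDual (innerDual (a '' J) : Set E)).exists_norm_le_mul_of_pos
    (by fun_prop : Continuous fun v => ∑ j ∈ J, max ⟪a j, v⟫ 0)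
    (fun r v hr => by simp only [real_inner_smul_right, Finset.mul_sum, mul_max_of_nonneg _ _ hr,
      mul_zero]) fun v hv hv0 => ?_
  by_contra! hφ
  have hneg : -v ∈ innerDual (a '' J) := by
    rintro _ ⟨j, hj, rfl⟩
    have : max ⟪a j, v⟫ 0 ≤ 0 := (Finset.single_le_sum (f := fun i => max ⟪a i, v⟫ 0)
      (fun i _ => le_max_right _ _) (Finset.mem_coe.1 hj)).trans hφ
    simpa [inner_neg_right] using (le_max_left _ _).trans this
  have : 0 ≤ ⟪-v, v⟫ := hv hneg
  rw [inner_neg_left, real_inner_self_eq_norm_sq] at this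
  exact hv0 (norm_eq_zero.1 (by nlinarith [norm_nonneg v]))

variable {a} {b : ι → ℝ}

open ProperCone in
theorem sub_mem_innerDual_innerDual_of_forall_inner_le [Finite ι] {x y : E}
    (hy : y ∈ polyhedron a b) (hproj : ∀ z ∈ polyhedron a b, ⟪x - y, z - y⟫ ≤ 0) {J : Finset ι}
    (hJ : ∀ j, ⟪a j, y⟫ = b j → j ∈ J) :
    x - y ∈ innerDual (innerDual (a '' J) : Set E) := by
  intro d hd
  change 0 ≤ ⟪d, x - y⟫
  have hfeas : ∀ j, ⟪a j, y⟫ = b j → ⟪a j, -d⟫ ≤ 0 := fun j hj => by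
    simpa [inner_neg_right] using hd (mem_image_of_mem a (hJ j hj))
  obtain ⟨ε, hεmem, hε⟩ :=
    ((eventually_add_smul_mem_polyhedron hy hfeas).and self_mem_nhdsWithin).exists
  have := hproj _ hεmem
  rw [add_sub_cancel_left, real_inner_smul_right, inner_neg_right, real_inner_comm] at this
  nlinarith

variable (a) in
theorem exists_hoffman_constant [Fintype ι] :
    ∃ C ≥ 0, ∀ b b' : ι → ℝ, (polyhedron a b).Nonempty → ∀ δ ≥ 0, (∀ j, b' j ≤ b j + δ) →
      ∀ x ∈ polyhedron a b', ∃ y ∈ polyhedron a b, dist x y ≤ C * δ := by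
  classical
  choose c hc0 hc using exists_norm_le_mul_sum_max_inner a
  obtain ⟨M, hM⟩ := Finite.exists_le c
  have hM0 : 0 ≤ M := (hc0 ∅).le.trans (hM ∅)
  refine ⟨M * Fintype.card ι, by positivity, fun b b' hne δ hδ hbb' x hx => ?_⟩
  obtain ⟨y, hy, hyx⟩ := exists_norm_eq_iInf_of_complete_convex hne
    (isClosed_polyhedron a b).isComplete (convex_polyhedron a b) x
  have hproj := (norm_eq_iInf_iff_real_inner_le_zero (convex_polyhedron a b) hy).1 hyx
  set J : Finset ι := {j | ⟪a j, y⟫ = b j}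
  have hcone := sub_mem_innerDual_innerDual_of_forall_inner_le hy hproj (J := J) (by simp [J])
  have hviol : ∑ j ∈ J, max ⟪a j, x - y⟫ 0 ≤ Fintype.card ι * δ := calc
    _ ≤ ∑ j ∈ J, δ := Finset.sum_le_sum fun j hj => max_le (by
        rw [inner_sub_right, (Finset.mem_filter.1 hj).2]
        linarith [hx j, hbb' j]) hδ
    _ = J.card * δ := by rw [Finset.sum_const, nsmul_eq_mul]
    _ ≤ Fintype.card ι * δ := by gcongr; exact J.card_le_univ
  refine ⟨y, hy, ?_⟩
  calc dist x y = ‖x - y‖ := dist_eq_norm x y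
    _ ≤ c J * ∑ j ∈ J, max ⟪a j, x - y⟫ 0 := hc J _ hcone
    _ ≤ M * (Fintype.card ι * δ) := by gcongr; exact hM J
    _ = M * Fintype.card ι * δ := by ring

end Hoffman

theorem statement16_general {K T : ℕ} (A : Matrix (Fin K) (Fin T) ℝ)
    (Λ : EuclideanSpace ℝ (Fin K) → Set (EuclideanSpace ℝ (Fin T)))
    (hΛ : ∀ b, Λ b = {x | ∀ j, (∑ t, A j t * x t) ≤ b j})
    (B : Set (EuclideanSpace ℝ (Fin K)))
    (hne : ∀ b ∈ B, (Λ b).Nonempty) :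
    ∃ C₀ > (0:ℝ), ∀ b ∈ B, ∀ b' ∈ B,
      hausdorffDist (Λ b) (Λ b') ≤ C₀ * ‖b - b'‖ := by
  set a : Fin K → EuclideanSpace ℝ (Fin T) := fun j => WithLp.toLp 2 (A j)
  have hΛa : ∀ b, Λ b = polyhedron a b := fun b => by
    ext x
    simp [hΛ, polyhedron, a, EuclideanSpace.inner_eq_star_dotProduct, dotProduct, mul_comm]
  obtain ⟨C, hC0, hC⟩ := exists_hoffman_constant a
  have hclose : ∀ b ∈ B, ∀ b', ∀ x ∈ Λ b', ∃ y ∈ Λ b, dist x y ≤ (C + 1) * ‖b - b'‖ := by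
    intro b hb b' x hx
    rw [hΛa] at hx ⊢
    have hcoord : ∀ j, b' j ≤ b j + ‖b - b'‖ := fun j => by
      have := (le_abs_self _).trans (PiLp.norm_apply_le (b' - b) j)
      simp only [PiLp.sub_apply] at this
      linarith [norm_sub_rev b b']
    obtain ⟨y, hy, hxy⟩ := hC b b' (hΛa b ▸ hne b hb) _ (norm_nonneg _) hcoord x hx
    exact ⟨y, hy, hxy.trans (by gcongr; linarith)⟩
  refine ⟨C + 1, by positivity, fun b hb b' hb' =>
    hausdorffDist_le_of_mem_dist (by positivity) (fun x hx => ?_) (hclose b hb b')⟩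
  simpa [norm_sub_rev] using hclose b' hb' b x hx

/-- Lipschitz dependence of polyhedra on the right-hand side.
Let `A` be a real `K × T` matrix and, for `b : ℝ^K`, let
`Λ b = {x : ℝ^T | A x ≤ b componentwise}`. If `B ⊆ ℝ^K` is compact and `Λ b`
is nonempty and bounded for every `b ∈ B`, then there is `C₀ > 0` such that
`d_H(Λ b, Λ b') ≤ C₀ * ‖b - b'‖` for all `b, b' ∈ B`. -/
theorem statement16 {K T : ℕ} (A : Matrix (Fin K) (Fin T) ℝ)
    (Λ : EuclideanSpace ℝ (Fin K) → Set (EuclideanSpace ℝ (Fin T)))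
    (hΛ : ∀ b, Λ b = {x | ∀ j, (∑ t, A j t * x t) ≤ b j})
    (B : Set (EuclideanSpace ℝ (Fin K))) (hBcpt : IsCompact B)
    (hne : ∀ b ∈ B, (Λ b).Nonempty)
    (hbdd : ∀ b ∈ B, Bornology.IsBounded (Λ b)) :
    ∃ C₀ > (0:ℝ), ∀ b ∈ B, ∀ b' ∈ B,
      hausdorffDist (Λ b) (Λ b') ≤ C₀ * ‖b - b'‖ :=
  statement16_general A Λ hΛ B hne
end

section
/- Meshgrid approximation of polyhedral feasibility sets: let A be a real K×T matrix, B ⊆ ℝ^K a convex compact set such that Λ_b := {x ∈ ℝ^T : A·x ≤ b} is nonempty and bounded for every b ∈ B, and let C₀ > 0 be such that d_H(Λ_b, Λ_{b′}) ≤ C₀·‖b − b′‖ for all b, b′ ∈ B. Let b : [0,1] → B be measurable, let S ⊆ [0,1] be measurable with μ := Leb(S) > 0, and suppose ‖b_θ − b_{θ′}‖ ≤ ε for all θ, θ′ ∈ S. Define X_S := {x ∈ ℝ^T : A·x ≤ ∫_S b_θ dθ}. Then (1/μ)·X_S = Λ_{(1/μ)∫_S b_θ dθ}, and for every θ′ ∈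 S: d_H(Λ_{b_{θ′}}, (1/μ)·X_S) ≤ C₀·ε. -/
open scoped RealInnerProductSpace BigOperators Pointwise
open Metric Set MeasureTheory

/-! The first claim is the positive homogeneity of the polyhedron `{x | A x ≤ v}` in `v`.
For the second, the rescaled set `(1/μ) • X_S` is the polyhedron at the average
`⨍_S b`. Averages of functions with values in a closed convex set stay in that set; applied to
`B` this puts `⨍_S b` in `B`, and applied to the ball `closedBall (b θ') ε`, which contains
`b θ` for every `θ ∈ S`, it gives `‖b θ' - ⨍_S b‖ ≤ ε`. The Lipschitz bound on `B` concludes. -/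

lemma smul_setOf_forall_sum_mul_le {ι κ : Type*} [Fintype κ] (A : Matrix ι κ ℝ)
    (v : EuclideanSpace ℝ ι) {c : ℝ} (hc : 0 < c) :
    c • {x : EuclideanSpace ℝ κ | ∀ j, ∑ t, A j t * x t ≤ v j} =
      {x | ∀ j, ∑ t, A j t * x t ≤ (c • v) j} := by
  ext x
  rw [mem_smul_set_iff_inv_smul_mem₀ hc.ne']
  simp only [mem_ofPred_eq, PiLp.smul_apply, smul_eq_mul]
  refine forall_congr' fun j => ?_
  have hsum : ∑ t, A j t * (c⁻¹ * x t) = c⁻¹ * ∑ t, A j t * x t := by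
    rw [Finset.mul_sum]
    exact Finset.sum_congr rfl fun t _ => by ring
  rw [hsum, inv_mul_le_iff₀ hc]

lemma Convex.setAverage_mem_of_forall_mem {α E : Type*} [MeasurableSpace α] {μ : Measure α}
    [NormedAddCommGroup E] [NormedSpace ℝ E] [CompleteSpace E] {C : Set E} {s : Set α}
    {f : α → E} (hC : Convex ℝ C) (hCc : IsClosed C) (hs : MeasurableSet s) (h0 : μ s ≠ 0)
    (hfin : μ s ≠ ⊤) (hf : IntegrableOn f s μ) (hfC : ∀ x ∈ s, f x ∈ C) :
    (⨍ x in s, f x ∂μ) ∈ C :=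
  hC.set_average_mem hCc h0 hfin
    (by filter_upwards [ae_restrict_mem hs] with x hx using hfC x hx) hf

lemma MeasureTheory.IntegrableOn.of_forall_mem_isBounded {α E : Type*} [MeasurableSpace α]
    {μ : Measure α} [NormedAddCommGroup E] [MeasurableSpace E] [OpensMeasurableSpace E]
    [SecondCountableTopology E] {B : Set E} {s : Set α} {f : α → E} (hB : Bornology.IsBounded B)
    (hs : MeasurableSet s) (hfin : μ s ≠ ⊤) (hf : Measurable f) (hfB : ∀ x ∈ s, f x ∈ B) :
    IntegrableOn f s μ := by
  obtain ⟨M, hM⟩ := hB.exists_norm_le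
  exact IntegrableOn.of_bound hfin.lt_top hf.aestronglyMeasurable M
    (by filter_upwards [ae_restrict_mem hs] with x hx using hM _ (hfB x hx))

theorem statement18_general {K T : ℕ} (A : Matrix (Fin K) (Fin T) ℝ)
    (Λ : EuclideanSpace ℝ (Fin K) → Set (EuclideanSpace ℝ (Fin T)))
    (hΛ : ∀ v, Λ v = {x | ∀ j, (∑ t, A j t * x t) ≤ v j})
    (B : Set (EuclideanSpace ℝ (Fin K)))
    (hBconv : Convex ℝ B) (hBcpt : IsCompact B)
    (C₀ : ℝ) (hC₀ : 0 < C₀)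
    (hlip : ∀ v ∈ B, ∀ v' ∈ B, hausdorffDist (Λ v) (Λ v') ≤ C₀ * ‖v - v'‖)
    (b : ℝ → EuclideanSpace ℝ (Fin K))
    (hbmeas : Measurable b) (hbB : ∀ θ ∈ Icc (0:ℝ) 1, b θ ∈ B)
    (S : Set ℝ) (hS : S ⊆ Icc (0:ℝ) 1) (hSmeas : MeasurableSet S)
    (μ : ℝ) (hμ : (volume S).toReal = μ) (hμpos : 0 < μ)
    (ε : ℝ) (hε : ∀ θ ∈ S, ∀ θ' ∈ S, ‖b θ - b θ'‖ ≤ ε)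
    (XS : Set (EuclideanSpace ℝ (Fin T)))
    (hXS : XS = {x | ∀ j, (∑ t, A j t * x t) ≤ (∫ θ in S, b θ) j}) :
    μ⁻¹ • XS = Λ (μ⁻¹ • ∫ θ in S, b θ) ∧
    ∀ θ' ∈ S, hausdorffDist (Λ (b θ')) (μ⁻¹ • XS) ≤ C₀ * ε := by
  have hScale : μ⁻¹ • XS = Λ (μ⁻¹ • ∫ θ in S, b θ) := by
    rw [hXS, hΛ, smul_setOf_forall_sum_mul_le A _ (inv_pos.mpr hμpos)]
  refine ⟨hScale, fun θ' hθ' => ?_⟩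
  have hfin : volume S ≠ ⊤ := (measure_mono hS).trans_lt (by simp [Real.volume_Icc]) |>.ne
  have h0 : volume S ≠ 0 := fun h => by simp [h, hμpos.ne] at hμ
  have hbS : ∀ θ ∈ S, b θ ∈ B := fun θ hθ => hbB θ (hS hθ)
  have hint : IntegrableOn b S :=
    .of_forall_mem_isBounded hBcpt.isBounded hSmeas hfin hbmeas hbS
  have havg : ⨍ θ in S, b θ = μ⁻¹ • ∫ θ in S, b θ := by
    rw [setAverage_eq, measureReal_def, hμ]
  have havgB : μ⁻¹ • ∫ θ in S, b θ ∈ B :=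
    havg ▸ hBconv.setAverage_mem_of_forall_mem hBcpt.isClosed hSmeas h0 hfin hint hbS
  have havgBall : μ⁻¹ • ∫ θ in S, b θ ∈ closedBall (b θ') ε :=
    havg ▸ (convex_closedBall _ _).setAverage_mem_of_forall_mem isClosed_closedBall hSmeas h0
      hfin hint fun θ hθ => by rw [mem_closedBall, dist_eq_norm]; exact hε θ hθ θ' hθ'
  rw [hScale]
  calc hausdorffDist (Λ (b θ')) (Λ (μ⁻¹ • ∫ θ in S, b θ))
      ≤ C₀ * ‖b θ' - μ⁻¹ • ∫ θ in S, b θ‖ := hlip _ (hbS θ' hθ') _ havgB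
    _ ≤ C₀ * ε := by
      rw [← dist_eq_norm, dist_comm]
      exact mul_le_mul_of_nonneg_left (mem_closedBall.mp havgBall) hC₀.le

/-- Meshgrid approximation of polyhedral feasibility sets.
Let `A` be a real `K × T` matrix, `Λ b = {x : ℝ^T | A x ≤ b}`, `B ⊆ ℝ^K`
convex compact with `Λ b` nonempty and bounded for every `b ∈ B`, and
`C₀ > 0` such that `d_H(Λ b, Λ b') ≤ C₀ ‖b - b'‖` on `B`. Let `b : [0,1] → B`
be measurable, `S ⊆ [0,1]` measurable with measure `μ > 0`, and
`‖b θ - b θ'‖ ≤ ε` for all `θ, θ' ∈ S`. With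
`X_S := {x | A x ≤ ∫_S b θ dθ} = Λ (∫_S b)`, we have
`(1/μ) • X_S = Λ ((1/μ) • ∫_S b)` and, for every `θ' ∈ S`,
`d_H(Λ (b θ'), (1/μ) • X_S) ≤ C₀ * ε`. -/
theorem statement18 {K T : ℕ} (A : Matrix (Fin K) (Fin T) ℝ)
    (Λ : EuclideanSpace ℝ (Fin K) → Set (EuclideanSpace ℝ (Fin T)))
    (hΛ : ∀ v, Λ v = {x | ∀ j, (∑ t, A j t * x t) ≤ v j})
    (B : Set (EuclideanSpace ℝ (Fin K)))
    (hBconv : Convex ℝ B) (hBcpt : IsCompact B)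
    (hne : ∀ v ∈ B, (Λ v).Nonempty)
    (hbdd : ∀ v ∈ B, Bornology.IsBounded (Λ v))
    (C₀ : ℝ) (hC₀ : 0 < C₀)
    (hlip : ∀ v ∈ B, ∀ v' ∈ B, hausdorffDist (Λ v) (Λ v') ≤ C₀ * ‖v - v'‖)
    (b : ℝ → EuclideanSpace ℝ (Fin K))
    (hbmeas : Measurable b) (hbB : ∀ θ ∈ Icc (0:ℝ) 1, b θ ∈ B)
    (S : Set ℝ) (hS : S ⊆ Icc (0:ℝ) 1) (hSmeas : MeasurableSet S)
    (μ : ℝ) (hμ : (volume S).toReal = μ) (hμpos : 0 < μ)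
    (ε : ℝ) (hε : ∀ θ ∈ S, ∀ θ' ∈ S, ‖b θ - b θ'‖ ≤ ε)
    (XS : Set (EuclideanSpace ℝ (Fin T)))
    (hXS : XS = {x | ∀ j, (∑ t, A j t * x t) ≤ (∫ θ in S, b θ) j}) :
    μ⁻¹ • XS = Λ (μ⁻¹ • ∫ θ in S, b θ) ∧
    ∀ θ' ∈ S, hausdorffDist (Λ (b θ')) (μ⁻¹ • XS) ≤ C₀ * ε :=
  statement18_general A Λ hΛ B hBconv hBcpt C₀ hC₀ hlip b hbmeas hbB S hS hSmeas μ hμ hμpos ε hε XS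
    hXS
end
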